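/- Let (A,≻,≺) be an anti-dendriform algebra and (V, l_≻, r_≻, l_≺, r_≺) a representation. If T: V → A is an O-operator of (A,≻,≺) associated to this representation, then the operations u ≻_V v := l_≻(T(u))v + r_≻(T(v))u and u ≺_V v := l_≺(T(u))v + r_≺(T(v))u make V into an anti-dendriform algebra, and T is a homomorphism of anti-dendriform algebras from (V,≻_V,≺_V) to (A,≻,≺). -/

import Mathlib

def IsLin (k : Type*) [Field k] {V W : Type*} [AddCommGroup V] [Module k V]
    [AddCommGroup W] [Module k W] (f : V → W) : Prop :=
  ∀ (c : k) (u v : V), f (c • u + v) = c • f u + f v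

def IsBilin (k : Type*) [Field k] {U V W : Type*} [AddCommGroup U] [Module k U]
    [AddCommGroup V] [Module k V] [AddCommGroup W] [Module k W]
    (f : U → V → W) : Prop :=
  (∀ x, IsLin k (f x)) ∧ (∀ y, IsLin k (fun x => f x y))

/-- An anti-dendriform algebra structure given by two bilinear operations `s` (≻) and `p` (≺). -/
def IsADAlg (k : Type*) [Field k] {A : Type*} [AddCommGroup A] [Module k A]
    (s p : A → A → A) : Prop :=
  IsBilin k s ∧ IsBilin k p ∧
  (∀ x y z, s x (s y z) = - s (s x y + p x y) z) ∧
  (∀ x y z, s x (s y z) = - p x (s y z + p y z)) ∧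
  (∀ x y z, s x (s y z) = p (p x y) z) ∧
  (∀ x y z, p (s x y) z = s x (p y z))

/-- A representation of an anti-dendriform algebra `(A, s, p)` on `V`. -/
def IsADRep (k : Type*) [Field k] {A V : Type*} [AddCommGroup A] [Module k A]
    [AddCommGroup V] [Module k V]
    (s p : A → A → A) (ls rs lp rp : A → V → V) : Prop :=
  IsBilin k ls ∧ IsBilin k rs ∧ IsBilin k lp ∧ IsBilin k rp ∧
  (∀ x y v, ls x (ls y v) = - ls (s x y + p x y) v) ∧
  (∀ x y v, ls x (ls y v) = - lp x (ls y v + lp y v)) ∧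
  (∀ x y v, ls x (ls y v) = lp (p x y) v) ∧
  (∀ x y v, rs (s x y) v = - rs y (rs x v + rp x v)) ∧
  (∀ x y v, rs (s x y) v = - rp (s x y + p x y) v) ∧
  (∀ x y v, rs (s x y) v = rp y (rp x v)) ∧
  (∀ x y v, ls x (rs y v) = - rs y (ls x v + lp x v)) ∧
  (∀ x y v, ls x (rs y v) = - lp x (rs y v + rp y v)) ∧
  (∀ x y v, ls x (rs y v) = rp y (lp x v)) ∧
  (∀ x y v, lp (s x y) v = ls x (lp y v)) ∧
  (∀ x y v, rp y (rs x v) = rs (p x y) v) ∧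
  (∀ x y v, rp y (ls x v) = ls x (rp y v))


/-! Expanding each defining identity of the induced structure on `V` by bilinearity gives three
terms, according to which of `x`, `y`, `z` is acted on last. Once the O-operator identities
`T (u ≻_V v) = T u ≻ T v` and `T (u ≺_V v) = T u ≺ T v` have moved the products inside the
actions, each term is matched by one of the twelve identities of the representation. -/

theorem IsLin.map_add {k V W : Type*} [Field k] [AddCommGroup V] [Module k V]
    [AddCommGroup W] [Module k W] {f : V → W} (hf : IsLin k f) (u v : V) :
    f (u + v) = f u + f v := by
  simpa using hf 1 u v

theorem IsBilin.map_add_right {k U V W : Type*} [Field k] [AddCommGroup U] [Module k U]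
    [AddCommGroup V] [Module k V] [AddCommGroup W] [Module k W] {f : U → V → W}
    (hf : IsBilin k f) (x : U) (u v : V) : f x (u + v) = f x u + f x v :=
  (hf.1 x).map_add u v

section InducedOp

variable {k A V : Type*} [Field k] [AddCommGroup A] [Module k A] [AddCommGroup V] [Module k V]

/-- The paper's `u ≻_V v` and `u ≺_V v` are `inducedOp ls rs T u v` and `inducedOp lp rp T u v`. -/
def inducedOp (l r : A → V → V) (T : V → A) (u v : V) : V :=
  l (T u) v + r (T v) u

variable {s p : A → A → A} {ls rs lp rp l r : A → V → V} {T : V → A}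

theorem isLin_inducedOp_right (hl : IsBilin k l) (hr : IsBilin k r) (hT : IsLin k T) (u : V) :
    IsLin k (inducedOp l r T u) := by
  intro c v w
  simp only [inducedOp, hl.1 (T u) c v w, hT c v w, hr.2 u c (T v) (T w)]
  module

theorem isBilin_inducedOp (hl : IsBilin k l) (hr : IsBilin k r) (hT : IsLin k T) :
    IsBilin k (inducedOp l r T) := by
  refine ⟨isLin_inducedOp_right hl hr hT, fun v => ?_⟩
  have hswap : (fun u => inducedOp l r T u v) = inducedOp r l T v := by
    funext u
    exact add_comm _ _
  rw [hswap]
  exact isLin_inducedOp_right hr hl hT v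

variable (k) in
def IsOOperator (s p : A → A → A) (ls rs lp rp : A → V → V) (T : V → A) : Prop :=
  IsLin k T ∧ (∀ u v, s (T u) (T v) = T (inducedOp ls rs T u v)) ∧
    (∀ u v, p (T u) (T v) = T (inducedOp lp rp T u v))

theorem inducedOp_assoc₁ (h : IsADRep k s p ls rs lp rp) (hT : IsOOperator k s p ls rs lp rp T)
    (x y z : V) :
    inducedOp ls rs T x (inducedOp ls rs T y z) =
      - inducedOp ls rs T (inducedOp ls rs T x y + inducedOp lp rp T x y) z := by
  obtain ⟨hls, hrs, -, -, r1, -, -, r4, -, -, r7, -⟩ := h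
  obtain ⟨hlin, hs, hp⟩ := hT
  unfold inducedOp at *
  rw [← hs y z, hlin.map_add, ← hs x y, ← hp x y]
  simp only [hls.map_add_right, r1, r4, r7, hrs.map_add_right]
  abel

theorem inducedOp_assoc₂ (h : IsADRep k s p ls rs lp rp) (hT : IsOOperator k s p ls rs lp rp T)
    (x y z : V) :
    inducedOp ls rs T x (inducedOp ls rs T y z) =
      - inducedOp lp rp T x (inducedOp ls rs T y z + inducedOp lp rp T y z) := by
  obtain ⟨hls, -, hlp, -, -, r2, -, -, r5, -, -, r8, -⟩ := h
  obtain ⟨hlin, hs, hp⟩ := hT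
  unfold inducedOp at *
  rw [← hs y z, hlin.map_add, ← hs y z, ← hp y z]
  simp only [hls.map_add_right, r2, r5, r8, hlp.map_add_right]
  abel

theorem inducedOp_assoc₃ (h : IsADRep k s p ls rs lp rp) (hT : IsOOperator k s p ls rs lp rp T)
    (x y z : V) :
    inducedOp ls rs T x (inducedOp ls rs T y z) =
      inducedOp lp rp T (inducedOp lp rp T x y) z := by
  obtain ⟨hls, -, -, hrp, -, -, r3, -, -, r6, -, -, r9, -⟩ := h
  obtain ⟨-, hs, hp⟩ := hT
  unfold inducedOp at *
  rw [← hs y z, ← hp x y]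
  simp only [hls.map_add_right, r3, r6, r9, hrp.map_add_right]
  abel

theorem inducedOp_assoc₄ (h : IsADRep k s p ls rs lp rp) (hT : IsOOperator k s p ls rs lp rp T)
    (x y z : V) :
    inducedOp lp rp T (inducedOp ls rs T x y) z =
      inducedOp ls rs T x (inducedOp lp rp T y z) := by
  obtain ⟨hls, -, -, hrp, -, -, -, -, -, -, -, -, -, r10, r11, r12⟩ := h
  obtain ⟨-, hs, hp⟩ := hT
  unfold inducedOp at *
  rw [← hs x y, ← hp y z]
  simp only [hls.map_add_right, r10, r11, r12, hrp.map_add_right]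
  abel

theorem isADAlg_inducedOp (h : IsADRep k s p ls rs lp rp) (hT : IsOOperator k s p ls rs lp rp T) :
    IsADAlg k (inducedOp ls rs T) (inducedOp lp rp T) :=
  ⟨isBilin_inducedOp h.1 h.2.1 hT.1, isBilin_inducedOp h.2.2.1 h.2.2.2.1 hT.1,
    inducedOp_assoc₁ h hT, inducedOp_assoc₂ h hT, inducedOp_assoc₃ h hT, inducedOp_assoc₄ h hT⟩

end InducedOp

theorem stmt18_general {k A V : Type*} [Field k] [AddCommGroup A] [Module k A]
    [AddCommGroup V] [Module k V]
    (s p : A → A → A) (ls rs lp rp : A → V → V)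
    (h : IsADRep k s p ls rs lp rp)
    (T : V → A) (hT : IsLin k T)
    (hT1 : ∀ u v, s (T u) (T v) = T (ls (T u) v + rs (T v) u))
    (hT2 : ∀ u v, p (T u) (T v) = T (lp (T u) v + rp (T v) u)) :
    IsADAlg k (fun u v : V => ls (T u) v + rs (T v) u)
      (fun u v : V => lp (T u) v + rp (T v) u) ∧
    (∀ u v : V, T (ls (T u) v + rs (T v) u) = s (T u) (T v)) ∧
    (∀ u v : V, T (lp (T u) v + rp (T v) u) = p (T u) (T v)) :=
  ⟨isADAlg_inducedOp h ⟨hT, hT1, hT2⟩, fun u v => (hT1 u v).symm, fun u v => (hT2 u v).symm⟩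

theorem stmt18 {k A V : Type*} [Field k] [AddCommGroup A] [Module k A]
    [AddCommGroup V] [Module k V]
    (s p : A → A → A) (ls rs lp rp : A → V → V)
    (hA : IsADAlg k s p) (h : IsADRep k s p ls rs lp rp)
    (T : V → A) (hT : IsLin k T)
    (hT1 : ∀ u v, s (T u) (T v) = T (ls (T u) v + rs (T v) u))
    (hT2 : ∀ u v, p (T u) (T v) = T (lp (T u) v + rp (T v) u)) :
    IsADAlg k (fun u v : V => ls (T u) v + rs (T v) u)
      (fun u v : V => lp (T u) v + rp (T v) u) ∧
    (∀ u v : V, T (ls (T u) v + rs (T v) u) = s (T u) (T v)) ∧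
    (∀ u v : V, T (lp (T u) v + rp (T v) u) = p (T u) (T v)) :=
  stmt18_general s p ls rs lp rp h T hT hT1 hT2
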